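/- Let t ≥ 1 and n ≥ 2t be integers, and let k₊ ≥ k₋ ≥ 0 be integers. If there exists a lattice Λ ⊆ ℤⁿ (an additive subgroup of ℤⁿ) such that the error-ball B(n,t,k₊,k₋) tiles ℤⁿ by Λ, then, as real numbers, (k₋+1)² / (k₊+k₋+1) < C(n,t)^{1/t}. -/

import Mathlib

open Finset

/-- Hamming weight of an integer vector: the number of nonzero entries. -/
def wt {n : ℕ} (x : Fin n → ℤ) : ℕ := (Finset.univ.filter (fun i => x i ≠ 0)).card

/-- The `(n,t,k₊,k₋)`-error-ball in `ℤⁿ`. -/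
def errBall (n t : ℕ) (kp km : ℤ) : Set (Fin n → ℤ) :=
  {x | (∀ i, -km ≤ x i ∧ x i ≤ kp) ∧ wt x ≤ t}

/-- `Tiles B T` : every `z ∈ ℤⁿ` is uniquely `z = v + b` with `v ∈ T` and `b ∈ B`. -/
def Tiles {n : ℕ} (B T : Set (Fin n → ℤ)) : Prop :=
  ∀ z : Fin n → ℤ, ∃! p : (Fin n → ℤ) × (Fin n → ℤ),
    p.1 ∈ T ∧ p.2 ∈ B ∧ z = p.1 + p.2

/-! Let `Λ` be a lattice tiling by the error-ball `B`. On `2t` fixed coordinates the cube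
`{0,…,k₋}^{2t}` has all its differences in `B - B` (split a difference into `t` coordinates and
the other `t`), while `B - B` meets `Λ` only in `0`; so the cube injects into `B` modulo `Λ`
and `(k₋+1)^{2t} ≤ |B|`. Every vector of `B` lies in one of the `C(n,t)` boxes `[-k₋,k₊]^T`,
`|T| = t`, and `0` lies in all of them, so `|B| < C(n,t) (k₊+k₋+1)^t`. Take `t`-th roots. -/

open scoped Pointwise

namespace Tiles

variable {n : ℕ} {Λ : AddSubgroup (Fin n → ℤ)}

theorem exists_sub_mem {B : Set (Fin n → ℤ)} (hT : Tiles B Λ) (z : Fin n → ℤ) :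
    ∃ b ∈ B, z - b ∈ Λ := by
  obtain ⟨⟨v, b⟩, ⟨hv, hb, rfl⟩, -⟩ := hT z
  exact ⟨b, hb, by simpa using hv⟩

theorem eq_of_sub_mem {B : Set (Fin n → ℤ)} (hT : Tiles B Λ) {b₁ b₂ : Fin n → ℤ}
    (h₁ : b₁ ∈ B) (h₂ : b₂ ∈ B) (h : b₁ - b₂ ∈ Λ) : b₁ = b₂ := by
  have := (hT b₁).unique (y₁ := (b₁ - b₂, b₂)) (y₂ := (0, b₁)) ⟨h, h₂, by simp⟩
    ⟨Λ.zero_mem, h₁, by simp⟩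
  exact (congrArg Prod.snd this).symm

theorem card_le_of_sub_subset {B S : Finset (Fin n → ℤ)}
    (hT : Tiles (B : Set (Fin n → ℤ)) Λ)
    (hS : (S : Set (Fin n → ℤ)) - S ⊆ (B : Set (Fin n → ℤ)) - B) : #S ≤ #B := by
  choose r hrB hrΛ using hT.exists_sub_mem
  refine card_le_card_of_injOn r (fun x _ => hrB x) fun x hx y hy hxy => ?_
  obtain ⟨b₁, hb₁, b₂, hb₂, hb : b₁ - b₂ = x - y⟩ := hS (Set.sub_mem_sub hx hy)
  have hΛ : b₁ - b₂ ∈ Λ := by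
    rw [hb, show x - y = (x - r x) - (y - r y) by rw [hxy]; abel]
    exact Λ.sub_mem (hrΛ x) (hrΛ y)
  rw [← sub_eq_zero, ← hb, sub_eq_zero]
  exact hT.eq_of_sub_mem hb₁ hb₂ hΛ

end Tiles

theorem Nat.one_lt_choose {n k : ℕ} (hk : 0 < k) (hkn : k < n) : 1 < n.choose k := by
  obtain ⟨m, rfl⟩ : ∃ m, n = m + 1 := ⟨n - 1, by omega⟩
  obtain ⟨j, rfl⟩ : ∃ j, k = j + 1 := ⟨k - 1, by omega⟩
  rw [Nat.choose_succ_succ']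
  have := Nat.choose_pos (show j ≤ m by omega)
  have := Nat.choose_pos (show j + 1 ≤ m by omega)
  omega

section ErrBall

variable {n t : ℕ} {kp km : ℤ}

noncomputable def errBallFinset (n t : ℕ) (kp km : ℤ) : Finset (Fin n → ℤ) :=
  {x ∈ Fintype.piFinset fun _ => Icc (-km) kp | wt x ≤ t}

theorem coe_errBallFinset :
    (errBallFinset n t kp km : Set (Fin n → ℤ)) = errBall n t kp km := by
  ext x
  simp [errBallFinset, errBall]

theorem wt_le_card_of_support_subset {x : Fin n → ℤ} {s : Finset (Fin n)}
    (h : ∀ i, x i ≠ 0 → i ∈ s) : wt x ≤ #s :=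
  card_le_card fun i hi => h i (mem_filter.1 hi).2

def supportBox (s : Finset (Fin n)) (I : Finset ℤ) : Finset (Fin n → ℤ) :=
  Fintype.piFinset fun i => if i ∈ s then I else {0}

theorem card_supportBox (s : Finset (Fin n)) (I : Finset ℤ) :
    #(supportBox s I) = #I ^ #s := by
  rw [supportBox, Fintype.card_piFinset, ← prod_const, ← univ_inter s, ← prod_ite_mem]
  exact prod_congr rfl fun i _ => by rw [univ_inter]; split_ifs <;> simp

theorem mem_supportBox {s : Finset (Fin n)} {I : Finset ℤ} {x : Fin n → ℤ} :
    x ∈ supportBox s I ↔ ∀ i, (i ∈ s → x i ∈ I) ∧ (i ∉ s → x i = 0) := by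
  refine Fintype.mem_piFinset.trans (forall_congr' fun i => ?_)
  by_cases hi : i ∈ s <;> simp [hi]

theorem mem_errBall_sub_errBall (hkp : km ≤ kp) {d : Fin n → ℤ}
    (hd : ∀ i, -km ≤ d i ∧ d i ≤ km) (hwt : wt d ≤ 2 * t) :
    d ∈ errBall n t kp km - errBall n t kp km := by
  set σ : Finset (Fin n) := {i | d i ≠ 0}
  obtain ⟨s, hsσ, hs⟩ := exists_subset_card_eq (min_le_right t #σ)
  refine ⟨fun i => if i ∈ s then d i else 0, ⟨fun i => ?_, ?_⟩,
    fun i => if i ∈ s then 0 else -d i, ⟨fun i => ?_, ?_⟩, ?_⟩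
  · have := hd i
    dsimp only
    split_ifs <;> omega
  · refine (wt_le_card_of_support_subset (s := s) fun i hi => ?_).trans (hs ▸ min_le_left _ _)
    by_contra h
    simp [h] at hi
  · have := hd i
    dsimp only
    split_ifs <;> omega
  · refine (wt_le_card_of_support_subset (s := σ \ s) fun i hi => ?_).trans ?_
    · by_cases h : i ∈ s
      · simp [h] at hi
      · simpa [σ, h] using hi
    · rw [card_sdiff_of_subset hsσ, hs]
      have : #σ ≤ 2 * t := hwt
      omega
  · ext i
    simp only [Pi.sub_apply]
    split_ifs <;> simp

theorem sub_supportBox_subset_errBall_sub_errBall (hkm : 0 ≤ km) (hkp : km ≤ kp)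
    {s : Finset (Fin n)} (hs : #s ≤ 2 * t) :
    (supportBox s (Icc 0 km) : Set (Fin n → ℤ)) - supportBox s (Icc 0 km) ⊆
      errBall n t kp km - errBall n t kp km := by
  rintro _ ⟨x, hx, y, hy, rfl⟩
  rw [mem_coe, mem_supportBox] at hx hy
  refine mem_errBall_sub_errBall hkp (fun i => ?_) ((wt_le_card_of_support_subset
    fun i hi => ?_).trans hs)
  · by_cases h : i ∈ s
    · have := (hx i).1 h
      have := (hy i).1 h
      simp only [mem_Icc, Pi.sub_apply] at *
      omega
    · simp [(hx i).2 h, (hy i).2 h, hkm]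
  · by_contra h
    simp [(hx i).2 h, (hy i).2 h] at hi

theorem pow_card_le_card_errBallFinset (hn : 2 * t ≤ n) (hkm : 0 ≤ km) (hkp : km ≤ kp)
    {Λ : AddSubgroup (Fin n → ℤ)} (hT : Tiles (errBall n t kp km) Λ) :
    #(Icc 0 km) ^ (2 * t) ≤ #(errBallFinset n t kp km) := by
  obtain ⟨s, -, hs⟩ := exists_subset_card_eq (s := (univ : Finset (Fin n))) (by simpa using hn)
  rw [← coe_errBallFinset] at hT
  rw [← hs, ← card_supportBox]
  refine hT.card_le_of_sub_subset ?_
  rw [coe_errBallFinset]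
  exact sub_supportBox_subset_errBall_sub_errBall hkm hkp hs.le

noncomputable def supportedBallPairs (n t : ℕ) (kp km : ℤ) :
    Finset (Σ _ : Finset (Fin n), Fin n → ℤ) :=
  (univ.powersetCard t).sigma fun T => supportBox T (Icc (-km) kp)

theorem card_supportedBallPairs :
    #(supportedBallPairs n t kp km) = n.choose t * #(Icc (-km) kp) ^ t := by
  rw [supportedBallPairs, card_sigma, sum_congr rfl fun T hT => by
    rw [card_supportBox, (mem_powersetCard.1 hT).2], sum_const, card_powersetCard, card_univ,
    Fintype.card_fin, smul_eq_mul]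

theorem errBallFinset_subset_image_snd (htn : t ≤ n) :
    errBallFinset n t kp km ⊆ (supportedBallPairs n t kp km).image Sigma.snd := by
  intro x hx
  simp only [errBallFinset, mem_filter, Fintype.mem_piFinset] at hx
  obtain ⟨T, hxT, -, hT⟩ := exists_subsuperset_card_eq (subset_univ {i | x i ≠ 0}) hx.2
    (by simpa using htn)
  refine mem_image.2 ⟨⟨T, x⟩, mem_sigma.2 ⟨mem_powersetCard.2 ⟨subset_univ T, hT⟩,
    mem_supportBox.2 fun i => ⟨fun _ => hx.1 i, fun hi => ?_⟩⟩, rfl⟩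
  by_contra h
  exact hi (hxT (by simpa using h))

theorem card_errBallFinset_lt (ht : 0 < t) (htn : t < n) (hkm : 0 ≤ km) (hkp : 0 ≤ kp) :
    #(errBallFinset n t kp km) < n.choose t * #(Icc (-km) kp) ^ t := by
  rw [← card_supportedBallPairs]
  refine (card_le_card (errBallFinset_subset_image_snd htn.le)).trans_lt
    (card_image_le.lt_of_ne fun h => ?_)
  -- the zero vector lies in the box of every `t`-set, and there are at least two of them
  have htwo : 1 < #((univ : Finset (Fin n)).powersetCard t) := by
    rw [card_powersetCard, card_univ, Fintype.card_fin]
    exact Nat.one_lt_choose ht htn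
  obtain ⟨T₁, hT₁, T₂, hT₂, hne⟩ := one_lt_card.1 htwo
  have hzero (T) (hT : T ∈ (univ : Finset (Fin n)).powersetCard t) :
      (⟨T, 0⟩ : Σ _ : Finset (Fin n), Fin n → ℤ) ∈ supportedBallPairs n t kp km :=
    mem_sigma.2 ⟨hT, mem_supportBox.2 fun i => ⟨fun _ => by simp [hkm, hkp], fun _ => rfl⟩⟩
  exact hne (congrArg Sigma.fst (card_image_iff.1 h (hzero T₁ hT₁) (hzero T₂ hT₂) rfl))

end ErrBall

theorem sq_div_lt_rpow_of_pow_lt {a c N : ℝ} {t : ℕ} (ha : 0 ≤ a) (hc : 0 < c) (ht : t ≠ 0)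
    (h : a ^ (2 * t) < N * c ^ t) : a ^ 2 / c < N ^ (1 / (t : ℝ)) := by
  have hN : 0 < N := pos_of_mul_pos_left ((pow_nonneg ha _).trans_lt h) (pow_nonneg hc.le _)
  rw [one_div, Real.lt_rpow_inv_iff_of_pos (by positivity) hN.le (by positivity),
    Real.rpow_natCast, div_pow, ← pow_mul, div_lt_iff₀ (by positivity)]
  exact h

theorem stmt_8 (n t : ℕ) (kp km : ℤ) (ht : 1 ≤ t) (hn : 2 * t ≤ n)
    (hkm : 0 ≤ km) (hkp : km ≤ kp)
    (hex : ∃ Λ : AddSubgroup (Fin n → ℤ),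
      Tiles (errBall n t kp km) (Λ : Set (Fin n → ℤ))) :
    ((km : ℝ) + 1) ^ 2 / ((kp : ℝ) + (km : ℝ) + 1) <
      ((n.choose t : ℝ)) ^ ((1 : ℝ) / (t : ℝ)) := by
  obtain ⟨Λ, hT⟩ := hex
  have hcount : #(Icc 0 km) ^ (2 * t) < n.choose t * #(Icc (-km) kp) ^ t :=
    (pow_card_le_card_errBallFinset hn hkm hkp hT).trans_lt
      (card_errBallFinset_lt ht (by omega) hkm (hkm.trans hkp))
  have hsize :
      ((#(Icc 0 km) : ℤ) : ℝ) = km + 1 ∧ ((#(Icc (-km) kp) : ℤ) : ℝ) = kp + km + 1 := by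
    rw [Int.card_Icc_of_le _ _ (by omega), Int.card_Icc_of_le _ _ (by omega)]
    push_cast
    constructor <;> ring
  have hkmR : (0 : ℝ) ≤ km := Int.cast_nonneg hkm
  have hkpR : (km : ℝ) ≤ kp := Int.cast_le.2 hkp
  refine sq_div_lt_rpow_of_pow_lt (by linarith) (by linarith) (by omega) ?_
  rw [← hsize.1, ← hsize.2]
  exact_mod_cast hcount
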